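/- arXiv:2002.00304 — 2 statements merged into one kernel-verified Lean document; each statement's English description precedes it below -/
import Mathlib

section
/- Let R be an alternative ring with a nontrivial idempotent e₁ satisfying conditions (i) and (ii), let n ≥ 2 be an integer and let D : R → R be a multiplicative Lie n-derivation. Then for every a ∈ R₁₁ and every b ∈ R₁₂ ∪ R₂₁ there exists z ∈ Z(R) such that D(a + b) = D(a) + D(b) + z. -/
/-- The commutative center of a (possibly non-associative, non-unital) ring. -/
def rctr (R : Type*) [NonUnitalNonAssocRing R] : Set R := {z | ∀ x, z * x = x * z}

/-- `R` is an alternative ring. -/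
def IsAlt (R : Type*) [NonUnitalNonAssocRing R] : Prop :=
  ∀ x y : R, (x * x) * y = x * (x * y) ∧ (y * x) * x = y * (x * x)

/-- Peirce components relative to an idempotent `e`. -/
def P11 {R : Type*} [NonUnitalNonAssocRing R] (e : R) : Set R := {x | e * x = x ∧ x * e = x}
def P12 {R : Type*} [NonUnitalNonAssocRing R] (e : R) : Set R := {x | e * x = x ∧ x * e = 0}
def P21 {R : Type*} [NonUnitalNonAssocRing R] (e : R) : Set R := {x | e * x = 0 ∧ x * e = x}
def P22 {R : Type*} [NonUnitalNonAssocRing R] (e : R) : Set R := {x | e * x = 0 ∧ x * e = 0}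

/-- The iterated commutator `p_n`: `p_1(x) = x`,
`p_n(x_1,…,x_n) = [p_{n-1}(x_1,…,x_{n-1}), x_n]`. -/
def pn {R : Type*} [NonUnitalNonAssocRing R] : (n : ℕ) → (Fin n → R) → R
  | 0, _ => 0
  | 1, x => x 0
  | (m+2), x =>
      pn (m+1) (fun i => x i.castSucc) * x (Fin.last (m+1))
        - x (Fin.last (m+1)) * pn (m+1) (fun i => x i.castSucc)

/-- A (not necessarily additive) map `D` is a multiplicative Lie `n`-derivation. -/
def IsMultLieNDeriv {R : Type*} [NonUnitalNonAssocRing R] (n : ℕ) (D : R → R) : Prop :=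
  ∀ x : Fin n → R, D (pn n x) = ∑ i : Fin n, pn n (Function.update x i (D (x i)))


/-! The additivity defect `T = D(a+b) - D a - D b` passes through `p_n`: as `p_n` is additive in
each slot and `D` is a Lie `n`-derivation, the defect of `D` at two values of `p_n` that differ in
one slot is `p_n` with `T` in that slot. With all remaining slots equal to `e₁`, `p_n` is an iterate
of `ad e₁ = [·, e₁]`, and in an alternative ring `ad e₁ ^ 3 = ad e₁`: it acts by `0`, `-1`, `1` on
`R₁₁ + R₂₂`, `R₁₂`, `R₂₁`. Since `ad e₁` kills `a`, this gives `[T, e₁] = 0`, i.e. `T ∈ R₁₁ + R₂₂`.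
Then, for `x` in the Peirce space opposite to `b`, the slots `(x, ·, e₁, …, e₁)` give
`ad e₁ [x, T] = 0` because `ad e₁` kills `[x, b]`; but `[x, T]` lies in the Peirce space of `x`,
so `[x, T] = 0`, and condition (i) or (ii) puts `T` in the center. -/

section

variable {R : Type*} [NonUnitalNonAssocRing R]

-- `ad e u = [u, e]` rather than `[e, u]`, so that `p_n(u, e, …, e)` is an iterate of `ad e`.
def ad (e : R) : R →+ R where
  toFun u := u * e - e * u
  map_zero' := by simp
  map_add' u v := by simp only [add_mul, mul_add]; abel

@[simp]
theorem ad_apply (e u : R) : ad e u = u * e - e * u := rfl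

theorem ad_eq_zero_of_mem_P11 {e x : R} (hx : x ∈ P11 e) : ad e x = 0 := by simp [hx.1, hx.2]

theorem ad_eq_zero_of_mem_P22 {e x : R} (hx : x ∈ P22 e) : ad e x = 0 := by simp [hx.1, hx.2]

theorem ad_of_mem_P12 {e x : R} (hx : x ∈ P12 e) : ad e x = -x := by simp [hx.1, hx.2]

theorem ad_of_mem_P21 {e x : R} (hx : x ∈ P21 e) : ad e x = x := by simp [hx.1, hx.2]

def defect (D : R → R) (u v : R) : R := D (u + v) - D u - D v

theorem defect_comm (D : R → R) (u v : R) : defect D u v = defect D v u := by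
  simp only [defect, add_comm u v]; abel

theorem pn_succ_succ {m : ℕ} (x : Fin (m + 2) → R) :
    pn (m + 2) x = ad (x (Fin.last (m + 1))) (pn (m + 1) (Fin.init x)) := rfl

theorem pn_eq_zero_of_apply_eq_zero : ∀ {n : ℕ} (x : Fin n → R) (i : Fin n), x i = 0 → pn n x = 0
  | 0, _, _, _ => rfl
  | 1, x, i, h => by rwa [Fin.fin_one_eq_zero i] at h
  | m + 2, x, i, h => by
    rw [pn_succ_succ]
    induction i using Fin.lastCases with
    | last => simp [h]
    | cast j =>
      rw [pn_eq_zero_of_apply_eq_zero (Fin.init x) j h, ad_apply, mul_zero, zero_mul, sub_zero]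

theorem pn_update_add : ∀ {n : ℕ} (x : Fin n → R) (i : Fin n) (u v : R),
    pn n (Function.update x i (u + v))
      = pn n (Function.update x i u) + pn n (Function.update x i v)
  | 0, _, i, _, _ => i.elim0
  | 1, x, i, u, v => by obtain rfl := Fin.fin_one_eq_zero i; simp [pn]
  | m + 2, x, i, u, v => by
    simp only [pn_succ_succ]
    induction i using Fin.lastCases with
    | last =>
      simp only [Fin.init_update_last, Function.update_self, ad_apply, mul_add, add_mul]
      abel
    | cast j =>
      simp only [Fin.init_update_castSucc, pn_update_add (Fin.init x) j u v, map_add,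
        Function.update_of_ne (Fin.castSucc_lt_last j).ne']

theorem pn_update_sub {n : ℕ} (x : Fin n → R) (i : Fin n) (u v : R) :
    pn n (Function.update x i (u - v))
      = pn n (Function.update x i u) - pn n (Function.update x i v) :=
  (AddMonoidHom.mk' (fun w => pn n (Function.update x i w)) (pn_update_add x i)).map_sub u v

theorem pn_update_const_zero (e : R) : ∀ (k : ℕ) (u : R),
    pn (k + 1) (Function.update (fun _ => e) 0 u) = (ad e)^[k] u
  | 0, u => rfl
  | k + 1, u => by
    rw [pn_succ_succ, ← Fin.castSucc_zero, Fin.init_update_castSucc,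
      Function.update_of_ne (Fin.castSucc_lt_last 0).ne']
    exact (congrArg (ad e) (pn_update_const_zero e k u)).trans
      (Function.iterate_succ_apply' _ _ _).symm

theorem pn_update_update_const (e : R) : ∀ (k : ℕ) (x u : R),
    pn (k + 2) (Function.update (Function.update (fun _ => e) 0 x) 1 u) = (ad e)^[k] (x * u - u * x)
  | 0, x, u => by simp [pn]
  | k + 1, x, u => by
    rw [pn_succ_succ, ← Fin.castSucc_one, Fin.init_update_castSucc, ← Fin.castSucc_zero,
      Fin.init_update_castSucc, Function.update_of_ne (Fin.castSucc_lt_last 1).ne',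
      Function.update_of_ne (Fin.castSucc_lt_last 0).ne']
    exact (congrArg (ad e) (pn_update_update_const e k x u)).trans
      (Function.iterate_succ_apply' _ _ _).symm

namespace IsMultLieNDeriv

variable {D : R → R}

theorem map_zero {m : ℕ} (hD : IsMultLieNDeriv (m + 2) D) : D 0 = 0 := by
  have h := hD fun _ => 0
  rw [pn_eq_zero_of_apply_eq_zero _ 0 rfl] at h
  refine h.trans (Finset.sum_eq_zero fun i _ => ?_)
  obtain ⟨j, hji⟩ : ∃ j : Fin (m + 2), j ≠ i := exists_ne i
  exact pn_eq_zero_of_apply_eq_zero _ j (Function.update_of_ne hji _ _)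

theorem defect_pn_update {n : ℕ} (hD : IsMultLieNDeriv n D) (x : Fin n → R) (i : Fin n)
    (u v : R) :
    defect D (pn n (Function.update x i u)) (pn n (Function.update x i v))
      = pn n (Function.update x i (defect D u v)) := by
  rw [defect, ← pn_update_add, hD, hD, hD, ← Finset.sum_sub_distrib, ← Finset.sum_sub_distrib,
    Finset.sum_eq_single i]
  · simp only [Function.update_self, Function.update_idem, defect, pn_update_sub]
  · intro j _ hji
    simp only [Function.update_of_ne hji, Function.update_comm hji.symm, pn_update_add]
    abel
  · simp

theorem iterate_ad_defect_eq_zero {m : ℕ} (hD : IsMultLieNDeriv (m + 2) D) {e u : R}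
    (hu : ad e u = 0) (v : R) : (ad e)^[m + 1] (defect D u v) = 0 := by
  rw [← pn_update_const_zero, ← hD.defect_pn_update, pn_update_const_zero, pn_update_const_zero,
    Function.iterate_succ_apply, hu, iterate_map_zero]
  simp [defect, hD.map_zero]

theorem iterate_ad_commutator_defect_eq_zero {m : ℕ} (hD : IsMultLieNDeriv (m + 2) D) {e x b : R}
    (hb : ad e (x * b - b * x) = 0) (a : R) :
    (ad e)^[m + 1 + m] (x * defect D a b - defect D a b * x) = 0 := by
  have hbm : ad e ((ad e)^[m] (x * b - b * x)) = 0 := by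
    rw [← Function.Commute.iterate_self (ad e) m, hb, iterate_map_zero]
  rw [Function.iterate_add_apply, ← pn_update_update_const, ← hD.defect_pn_update,
    pn_update_update_const, pn_update_update_const, defect_comm]
  exact hD.iterate_ad_defect_eq_zero hbm _

end IsMultLieNDeriv

namespace IsAlt

theorem linearized_left (halt : IsAlt R) (x y z : R) :
    x * (y * z) = x * y * z + y * x * z - y * (x * z) := by
  have h := (halt (x + y) z).1
  simp only [add_mul, mul_add, (halt x z).1, (halt y z).1] at h
  linear_combination (norm := abel1) -h

theorem linearized_right (halt : IsAlt R) (x y z : R) :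
    x * y * z = x * (y * z) + x * (z * y) - x * z * y := by
  have h := (halt (y + z) x).2
  simp only [add_mul, mul_add, (halt y x).2, (halt z x).2] at h
  linear_combination (norm := abel1) h

theorem linearized_flexible (halt : IsAlt R) (x y z : R) :
    x * y * z + z * y * x = x * (y * z) + z * (y * x) := by
  linear_combination (norm := abel1)
    -halt.linearized_left x y z - halt.linearized_right y x z - halt.linearized_left y z x

variable {e : R}

theorem idem_mul_idem_mul (halt : IsAlt R) (he : e * e = e) (w : R) : e * (e * w) = e * w := by
  rw [← (halt e w).1, he]

theorem mul_idem_mul_idem (halt : IsAlt R) (he : e * e = e) (w : R) : w * e * e = w * e := by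
  rw [(halt e w).2, he]

theorem idem_mul_mul_idem (halt : IsAlt R) (he : e * e = e) (w : R) : e * w * e = e * (w * e) := by
  rw [halt.linearized_right, he, halt.idem_mul_idem_mul he, add_sub_cancel_right]

theorem ad_ad_ad (halt : IsAlt R) (he : e * e = e) (u : R) : ad e (ad e (ad e u)) = ad e u := by
  simp only [ad_apply, sub_mul, mul_sub, halt.idem_mul_idem_mul he, halt.mul_idem_mul_idem he,
    halt.idem_mul_mul_idem he]
  abel

theorem iterate_ad_succ_eq (halt : IsAlt R) (he : e * e = e) (u : R) :
    ∀ k : ℕ, (ad e)^[k + 1] u = ad e u ∨ (ad e)^[k + 1] u = ad e (ad e u)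
  | 0 => Or.inl rfl
  | k + 1 => by
    rw [Function.iterate_succ_apply']
    rcases halt.iterate_ad_succ_eq he u k with h | h <;> rw [h]
    · exact Or.inr rfl
    · exact Or.inl (halt.ad_ad_ad he u)

theorem ad_eq_zero_of_iterate_eq_zero (halt : IsAlt R) (he : e * e = e) {u : R} {k : ℕ}
    (hk : k ≠ 0) (h : (ad e)^[k] u = 0) : ad e u = 0 := by
  obtain ⟨k, rfl⟩ := Nat.exists_eq_succ_of_ne_zero hk
  rcases halt.iterate_ad_succ_eq he u k with h' | h' <;> rw [h'] at h
  · exact h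
  · rw [← halt.ad_ad_ad he, h, map_zero]

theorem exists_P11_P22_of_ad_eq_zero (halt : IsAlt R) (he : e * e = e) {c : R}
    (hc : ad e c = 0) : ∃ c₁ ∈ P11 e, ∃ c₂ ∈ P22 e, c = c₁ + c₂ := by
  have hce : c * e = e * c := sub_eq_zero.mp hc
  refine ⟨e * c, ⟨halt.idem_mul_idem_mul he c, ?_⟩, c - e * c, ⟨?_, ?_⟩, by abel⟩
  · rw [← hce, halt.mul_idem_mul_idem he]
  · rw [mul_sub, halt.idem_mul_idem_mul he, sub_self]
  · rw [sub_mul, ← hce, halt.mul_idem_mul_idem he, sub_self]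

variable {x y c₁ c₂ : R}

theorem mul_mem_P11_of_P12_of_P21 (halt : IsAlt R) (hx : x ∈ P12 e) (hy : y ∈ P21 e) :
    x * y ∈ P11 e :=
  ⟨by rw [halt.linearized_left e x y, hx.1, hx.2, hy.1]; simp,
    by rw [halt.linearized_right x y e, hy.2, hy.1, hx.2]; simp⟩

theorem mul_mem_P22_of_P21_of_P12 (halt : IsAlt R) (hx : x ∈ P21 e) (hy : y ∈ P12 e) :
    x * y ∈ P22 e :=
  ⟨by rw [halt.linearized_left e x y, hx.1, hx.2, hy.1]; simp,
    by rw [halt.linearized_right x y e, hy.2, hy.1, hx.2]; simp⟩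

theorem mul_mem_P21_of_P21_of_P11 (halt : IsAlt R) (hx : x ∈ P21 e) (hy : y ∈ P11 e) :
    x * y ∈ P21 e :=
  ⟨by rw [halt.linearized_left e x y, hx.1, hx.2, hy.1]; simp,
    by rw [halt.linearized_right x y e, hy.2, hy.1, hx.2]; simp⟩

theorem mul_mem_P21_of_P22_of_P21 (halt : IsAlt R) (hx : x ∈ P22 e) (hy : y ∈ P21 e) :
    x * y ∈ P21 e :=
  ⟨by rw [halt.linearized_left e x y, hx.1, hx.2, hy.1]; simp,
    by rw [halt.linearized_right x y e, hy.2, hy.1, hx.2]; simp⟩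

theorem mul_mem_P12_of_P11_of_P12 (halt : IsAlt R) (hx : x ∈ P11 e) (hy : y ∈ P12 e) :
    x * y ∈ P12 e :=
  ⟨by rw [halt.linearized_left e x y, hx.1, hx.2, hy.1]; simp,
    by rw [halt.linearized_right x y e, hy.2, hy.1, hx.2]; simp⟩

theorem mul_mem_P12_of_P12_of_P22 (halt : IsAlt R) (hx : x ∈ P12 e) (hy : y ∈ P22 e) :
    x * y ∈ P12 e :=
  ⟨by rw [halt.linearized_left e x y, hx.1, hx.2, hy.1]; simp,
    by rw [halt.linearized_right x y e, hy.2, hy.1, hx.2]; simp⟩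

theorem mul_eq_zero_of_P11_of_P21 (halt : IsAlt R) (hx : x ∈ P11 e) (hy : y ∈ P21 e) :
    x * y = 0 := by
  have h := halt.linearized_flexible x e y
  rw [hx.1, hx.2, hy.1, hy.2] at h
  simpa [eq_comm] using h

theorem mul_eq_zero_of_P21_of_P22 (halt : IsAlt R) (hx : x ∈ P21 e) (hy : y ∈ P22 e) :
    x * y = 0 := by
  have h := halt.linearized_flexible x e y
  rw [hx.1, hx.2, hy.1, hy.2] at h
  simpa [eq_comm] using h

theorem mul_eq_zero_of_P12_of_P11 (halt : IsAlt R) (hx : x ∈ P12 e) (hy : y ∈ P11 e) :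
    x * y = 0 := by
  have h := halt.linearized_flexible x e y
  rw [hx.1, hx.2, hy.1, hy.2] at h
  simpa [eq_comm] using h

theorem mul_eq_zero_of_P22_of_P12 (halt : IsAlt R) (hx : x ∈ P22 e) (hy : y ∈ P12 e) :
    x * y = 0 := by
  have h := halt.linearized_flexible x e y
  rw [hx.1, hx.2, hy.1, hy.2] at h
  simpa [eq_comm] using h

theorem ad_commutator_eq_zero (halt : IsAlt R) (hx : x ∈ P12 e) (hy : y ∈ P21 e) :
    ad e (x * y - y * x) = 0 := by
  rw [map_sub, ad_eq_zero_of_mem_P11 (halt.mul_mem_P11_of_P12_of_P21 hx hy),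
    ad_eq_zero_of_mem_P22 (halt.mul_mem_P22_of_P21_of_P12 hy hx), sub_zero]

theorem ad_commutator_of_P21 (halt : IsAlt R) (hx : x ∈ P21 e) (hc₁ : c₁ ∈ P11 e)
    (hc₂ : c₂ ∈ P22 e) :
    ad e (x * (c₁ + c₂) - (c₁ + c₂) * x) = x * (c₁ + c₂) - (c₁ + c₂) * x := by
  rw [mul_add, add_mul, halt.mul_eq_zero_of_P21_of_P22 hx hc₂,
    halt.mul_eq_zero_of_P11_of_P21 hc₁ hx, add_zero, zero_add, map_sub,
    ad_of_mem_P21 (halt.mul_mem_P21_of_P21_of_P11 hx hc₁),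
    ad_of_mem_P21 (halt.mul_mem_P21_of_P22_of_P21 hc₂ hx)]

theorem ad_commutator_of_P12 (halt : IsAlt R) (hx : x ∈ P12 e) (hc₁ : c₁ ∈ P11 e)
    (hc₂ : c₂ ∈ P22 e) :
    ad e (x * (c₁ + c₂) - (c₁ + c₂) * x) = -(x * (c₁ + c₂) - (c₁ + c₂) * x) := by
  rw [mul_add, add_mul, halt.mul_eq_zero_of_P12_of_P11 hx hc₁,
    halt.mul_eq_zero_of_P22_of_P12 hc₂ hx, zero_add, add_zero, map_sub,
    ad_of_mem_P12 (halt.mul_mem_P12_of_P12_of_P22 hx hc₂),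
    ad_of_mem_P12 (halt.mul_mem_P12_of_P11_of_P12 hc₁ hx), neg_sub_neg, neg_sub]

end IsAlt

end

theorem stmt1_general {R : Type*} [NonUnitalNonAssocRing R] (halt : IsAlt R)
    (e₁ : R) (he : e₁ * e₁ = e₁)
    (hcondi : ∀ a ∈ P11 e₁, ∀ b ∈ P22 e₁,
      (∀ x ∈ P12 e₁, (a + b) * x = x * (a + b)) → a + b ∈ rctr R)
    (hcondii : ∀ a ∈ P11 e₁, ∀ b ∈ P22 e₁,
      (∀ x ∈ P21 e₁, (a + b) * x = x * (a + b)) → a + b ∈ rctr R)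
    (n : ℕ) (hn : 2 ≤ n) (D : R → R) (hD : IsMultLieNDeriv n D) :
    ∀ a ∈ P11 e₁, ∀ b ∈ P12 e₁ ∪ P21 e₁, ∃ z ∈ rctr R, D (a + b) = D a + D b + z := by
  obtain ⟨m, rfl⟩ : ∃ m, n = m + 2 := ⟨n - 2, by omega⟩
  intro a ha b hb
  refine ⟨defect D a b, ?_, by rw [defect]; abel⟩
  have hT : ad e₁ (defect D a b) = 0 :=
    halt.ad_eq_zero_of_iterate_eq_zero he (Nat.succ_ne_zero m)
      (hD.iterate_ad_defect_eq_zero (ad_eq_zero_of_mem_P11 ha) b)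
  obtain ⟨c₁, hc₁, c₂, hc₂, hc⟩ := halt.exists_P11_P22_of_ad_eq_zero he hT
  have hcomm {x : R} (hb : ad e₁ (x * b - b * x) = 0) :
      ad e₁ (x * (c₁ + c₂) - (c₁ + c₂) * x) = 0 := by
    rw [← hc]
    exact halt.ad_eq_zero_of_iterate_eq_zero he (by omega)
      (hD.iterate_ad_commutator_defect_eq_zero hb a)
  rw [hc]
  rcases hb with hb | hb
  · refine hcondii c₁ hc₁ c₂ hc₂ fun x hx => (sub_eq_zero.mp ?_).symm
    have hxb : ad e₁ (x * b - b * x) = 0 := by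
      rw [← neg_sub, map_neg, halt.ad_commutator_eq_zero hb hx, neg_zero]
    rw [← halt.ad_commutator_of_P21 hx hc₁ hc₂, hcomm hxb]
  · refine hcondi c₁ hc₁ c₂ hc₂ fun x hx => (sub_eq_zero.mp ?_).symm
    rw [← neg_eq_zero, ← halt.ad_commutator_of_P12 hx hc₁ hc₂,
      hcomm (halt.ad_commutator_eq_zero hx hb)]

theorem stmt1 {R : Type*} [NonUnitalNonAssocRing R] (halt : IsAlt R)
    (e₁ : R) (he : e₁ * e₁ = e₁) (hne : e₁ ≠ 0)
    (hnu : ¬ ∀ x : R, e₁ * x = x ∧ x * e₁ = x)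
    (hcondi : ∀ a ∈ P11 e₁, ∀ b ∈ P22 e₁,
      (∀ x ∈ P12 e₁, (a + b) * x = x * (a + b)) → a + b ∈ rctr R)
    (hcondii : ∀ a ∈ P11 e₁, ∀ b ∈ P22 e₁,
      (∀ x ∈ P21 e₁, (a + b) * x = x * (a + b)) → a + b ∈ rctr R)
    (n : ℕ) (hn : 2 ≤ n) (D : R → R) (hD : IsMultLieNDeriv n D) :
    ∀ a ∈ P11 e₁, ∀ b ∈ P12 e₁ ∪ P21 e₁, ∃ z ∈ rctr R, D (a + b) = D a + D b + z :=
  stmt1_general halt e₁ he hcondi hcondii n hn D hD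
end

section
/- Let R be a 3-torsion free prime alternative ring with a nontrivial idempotent e₁. Then R satisfies conditions (1), (2) and (3): (1) if x ∈ R₁₂ and x*y = 0 for all y ∈ R₂₁ then x = 0, and if x ∈ R₂₁ and x*y = 0 for all y ∈ R₁₂ then x = 0; (2) if x ∈ R₁₁ and x*y = 0 for all y ∈ R₁₂ then x = 0, and if x ∈ R₁₁ and y*x = 0 for all y ∈ R₂₁ then x = 0; (3) if x ∈ R₂₂ and y*x = 0 for all y ∈ R₁₂ then x = 0, and if x ∈ R₂₂ and x*y = 0 for all y ∈ R₂₁ then x = 0. -/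
/-- A two-sided ideal of a possibly non-associative, non-unital ring, as a set. -/
def IsIdealSet {R : Type*} [NonUnitalNonAssocRing R] (I : Set R) : Prop :=
  (0 : R) ∈ I ∧ (∀ a ∈ I, ∀ b ∈ I, a + b ∈ I) ∧ (∀ a ∈ I, -a ∈ I) ∧
    ∀ r : R, ∀ a ∈ I, r * a ∈ I ∧ a * r ∈ I

/-- `R` is a prime ring: any two nonzero ideals have a nonzero product of elements. -/
def IsPrimeRing (R : Type*) [NonUnitalNonAssocRing R] : Prop :=
  ∀ A B : Set R, IsIdealSet A → IsIdealSet B → A ≠ {0} → B ≠ {0} →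
    ∃ a ∈ A, ∃ b ∈ B, a * b ≠ 0

/-!
The Peirce decomposition relative to `e₁` is symmetric under exchanging the indices `1` and `2`,
which turns each of the three conditions for `R₁₂` and `R₁₁` into its counterpart for `R₂₁` and
`R₂₂`.

In an alternative ring the one-sided annihilators of an ideal are ideals, so in a prime ring an
element annihilating a nonzero ideal on one side is zero. For (2), an `x ∈ R₁₁` with `x R₁₂ = 0`
annihilates the ideal generated by `R₁₂ + R₂₁ + R₂₂`, which is nonzero because `e₁` is not a unity;
the other half of (2) is the mirror image. For (1), if `a ∈ R₁₂` and `a R₂₁ = 0`, the ideal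
generated by `a` is described through its Peirce components, and a computation with the linearized
alternative laws and the Moufang identities shows that `a` annihilates it; since `a` lies in it,
`a = 0`.
-/

namespace IsAlt

variable {R : Type*} [NonUnitalNonAssocRing R] (halt : IsAlt R)
include halt

theorem associator_self_left (x y : R) : associator x x y = 0 :=
  sub_eq_zero_of_eq (halt x y).1

theorem associator_self_right (x y : R) : associator y x x = 0 :=
  sub_eq_zero_of_eq (halt x y).2

theorem associator_swap_left (x y z : R) : associator y x z = -associator x y z := by
  have h := halt.associator_self_left (x + y) z
  have hx := halt.associator_self_left x z
  have hy := halt.associator_self_left y z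
  simp only [associator_apply, add_mul, mul_add] at h hx hy ⊢
  linear_combination (norm := abel) h - hx - hy

theorem associator_swap_right (x y z : R) : associator x z y = -associator x y z := by
  have h := halt.associator_self_right (y + z) x
  have hy := halt.associator_self_right y x
  have hz := halt.associator_self_right z x
  simp only [associator_apply, add_mul, mul_add] at h hy hz ⊢
  linear_combination (norm := abel) h - hy - hz

theorem associator_cycle (x y z : R) : associator y z x = associator x y z := by
  rw [halt.associator_swap_right, halt.associator_swap_left, neg_neg]

/-- `(x, y, z) + (y, x, z) = 0`, solved for `x * (y * z)`. -/
theorem mul_mul_eq_left (x y z : R) : x * (y * z) = x * y * z + y * x * z - y * (x * z) := by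
  have h := halt.associator_swap_left x y z
  simp only [associator_apply] at h
  linear_combination (norm := abel) -h

/-- `(x, y, z) + (x, z, y) = 0`, solved for `x * y * z`. -/
theorem mul_mul_eq_right (x y z : R) : x * y * z = x * (y * z) + x * (z * y) - x * z * y := by
  have h := halt.associator_swap_right x y z
  simp only [associator_apply] at h
  linear_combination (norm := abel) h

theorem associator_mul_self (x y z : R) :
    associator y z x * x = associator x (x * y) z := by
  have t₁ := associator_cocycle y z x x
  have t₂ := associator_cocycle z x x y
  rw [halt.associator_self_right x (y * z), halt.associator_self_right x z, mul_zero] at t₁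
  rw [halt.associator_self_left x y, halt.associator_self_right x z, mul_zero, zero_mul] at t₂
  have c₁ := halt.associator_cycle y z (x * x)
  have c₂ := halt.associator_cycle y (z * x) x
  have c₃ := halt.associator_cycle z x (x * y)
  linear_combination (norm := abel) t₁ + t₂ - c₁ + c₂ - c₃

theorem self_mul_associator (x y z : R) :
    x * associator x z y = associator (y * x) x z := by
  have t₃ := associator_cocycle x x z y
  have t₄ := associator_cocycle y x x z
  rw [halt.associator_self_left x (z * y), halt.associator_self_left x z, zero_mul] at t₃
  rw [halt.associator_self_left x z, halt.associator_self_right x y, mul_zero, zero_mul] at t₄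
  have c₄ := halt.associator_cycle y (x * x) z
  have c₅ := halt.associator_cycle y x (x * z)
  linear_combination (norm := abel) t₃ + t₄ + c₄ - c₅

theorem moufang_left (x y z : R) : x * (y * x) * z = x * (y * (x * z)) := by
  rw [← sub_eq_zero]
  calc x * (y * x) * z - x * (y * (x * z))
      = associator x (y * x) z + x * associator y x z := by
        simp only [associator_apply, mul_sub]; abel
    _ = associator x (y * x) z + associator (y * x) x z := by
        rw [← halt.associator_cycle y x z, halt.self_mul_associator]
    _ = 0 := by rw [halt.associator_swap_left, neg_add_cancel]

theorem moufang_right (x y z : R) : z * x * y * x = z * (x * y * x) := by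
  rw [← sub_eq_zero]
  calc z * x * y * x - z * (x * y * x)
      = associator z x y * x + associator z (x * y) x := by
        simp only [associator_apply, sub_mul]; abel
    _ = associator x (x * y) z + associator z (x * y) x := by
        rw [← halt.associator_cycle z x y, ← halt.associator_cycle x y z, halt.associator_mul_self]
    _ = 0 := by
        rw [← halt.associator_cycle x (x * y) z, halt.associator_swap_left (x * y) z x,
          add_neg_cancel]

theorem moufang_middle (x y z : R) : x * y * (z * x) = x * (y * z) * x := by
  rw [← sub_eq_zero]
  calc x * y * (z * x) - x * (y * z) * x
      = associator x y z * x - associator (x * y) z x := by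
        simp only [associator_apply, sub_mul]; abel
    _ = 0 := by
        rw [← halt.associator_cycle x y z, halt.associator_mul_self,
          halt.associator_cycle x (x * y) z, sub_self]

end IsAlt

section Ideals

variable {R : Type*} [NonUnitalNonAssocRing R]

open AddSubgroup in
theorem isIdealSet_closure {s : Set R}
    (h : ∀ r, ∀ g ∈ s, r * g ∈ closure s ∧ g * r ∈ closure s) :
    IsIdealSet (closure s : Set R) := by
  refine ⟨zero_mem _, fun _ ha _ hb => add_mem ha hb, fun _ ha => neg_mem ha, fun r x hx => ?_⟩
  induction hx using closure_induction with
  | mem g hg => exact h r g hg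
  | zero => simp only [mul_zero, zero_mul, SetLike.mem_coe, zero_mem, and_self]
  | add x y _ _ hx hy => rw [mul_add, add_mul]; exact ⟨add_mem hx.1 hy.1, add_mem hx.2 hy.2⟩
  | neg x _ hx => rw [mul_neg, neg_mul]; exact ⟨neg_mem hx.1, neg_mem hx.2⟩

theorem mul_closure_eq_zero {s : Set R} {x i : R} (h : ∀ g ∈ s, x * g = 0)
    (hi : i ∈ AddSubgroup.closure s) : x * i = 0 :=
  (AddSubgroup.closure_le (AddMonoidHom.mulLeft x).ker).2 h hi

theorem closure_mul_eq_zero {s : Set R} {x i : R} (h : ∀ g ∈ s, g * x = 0)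
    (hi : i ∈ AddSubgroup.closure s) : i * x = 0 :=
  (AddSubgroup.closure_le (AddMonoidHom.mulRight x).ker).2 h hi

theorem IsAlt.isIdealSet_leftAnnihilator (halt : IsAlt R) {I : Set R} (hI : IsIdealSet I) :
    IsIdealSet {x | ∀ i ∈ I, x * i = 0} := by
  obtain ⟨-, -, -, hmul⟩ := hI
  refine ⟨fun i _ => zero_mul i, fun a ha b hb i hi => by rw [add_mul, ha i hi, hb i hi, add_zero],
    fun a ha i hi => by rw [neg_mul, ha i hi, neg_zero], fun r x hx => ?_⟩
  have hassoc : ∀ i ∈ I, associator x r i = 0 := fun i hi => by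
    rw [halt.associator_swap_right, associator_apply, hx i hi, hx _ (hmul r i hi).2, zero_mul,
      sub_zero, neg_zero]
  refine ⟨fun i hi => ?_, fun i hi => ?_⟩
  · have h := halt.associator_swap_left x r i
    rwa [hassoc i hi, neg_zero, associator_apply, hx i hi, mul_zero, sub_zero] at h
  · have h := hassoc i hi
    rwa [associator_apply, hx _ (hmul r i hi).1, sub_zero] at h

theorem IsAlt.isIdealSet_rightAnnihilator (halt : IsAlt R) {I : Set R} (hI : IsIdealSet I) :
    IsIdealSet {x | ∀ i ∈ I, i * x = 0} := by
  obtain ⟨-, -, -, hmul⟩ := hI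
  refine ⟨fun i _ => mul_zero i, fun a ha b hb i hi => by rw [mul_add, ha i hi, hb i hi, add_zero],
    fun a ha i hi => by rw [mul_neg, ha i hi, neg_zero], fun r x hx => ?_⟩
  have hassoc : ∀ i ∈ I, associator i r x = 0 := fun i hi => by
    rw [halt.associator_swap_left, associator_apply, hx _ (hmul r i hi).1, hx i hi, mul_zero,
      sub_zero, neg_zero]
  refine ⟨fun i hi => ?_, fun i hi => ?_⟩
  · have h := hassoc i hi
    rwa [associator_apply, hx _ (hmul r i hi).2, zero_sub, neg_eq_zero] at h
  · have h := halt.associator_swap_right i r x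
    rwa [hassoc i hi, neg_zero, associator_apply, hx i hi, zero_mul, zero_sub, neg_eq_zero] at h

theorem AddSubgroup.coe_ne_singleton_zero {I : AddSubgroup R} (hI : I ≠ ⊥) :
    (I : Set R) ≠ {0} :=
  fun h => hI (SetLike.coe_set_eq.1 (h.trans AddSubgroup.coe_bot.symm))

theorem IsPrimeRing.eq_zero_of_mul_ideal_eq_zero (hprime : IsPrimeRing R) (halt : IsAlt R)
    {I : AddSubgroup R} (hI : IsIdealSet (I : Set R)) (hI0 : I ≠ ⊥) {x : R}
    (hx : ∀ i ∈ I, x * i = 0) : x = 0 := by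
  by_contra hx0
  obtain ⟨y, hy, i, hi, hyi⟩ := hprime _ _ (halt.isIdealSet_leftAnnihilator hI) hI
    (fun h => hx0 (h ▸ hx : x ∈ ({0} : Set R))) (AddSubgroup.coe_ne_singleton_zero hI0)
  exact hyi (hy i hi)

theorem IsPrimeRing.eq_zero_of_ideal_mul_eq_zero (hprime : IsPrimeRing R) (halt : IsAlt R)
    {I : AddSubgroup R} (hI : IsIdealSet (I : Set R)) (hI0 : I ≠ ⊥) {x : R}
    (hx : ∀ i ∈ I, i * x = 0) : x = 0 := by
  by_contra hx0
  obtain ⟨i, hi, y, hy, hiy⟩ := hprime _ _ hI (halt.isIdealSet_rightAnnihilator hI)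
    (AddSubgroup.coe_ne_singleton_zero hI0) (fun h => hx0 (h ▸ hx : x ∈ ({0} : Set R)))
  exact hiy (hy i hi)

end Ideals

/-- An abstract Peirce decomposition with the multiplication table of an alternative ring. It is
axiomatized rather than built from an idempotent `e` because its symmetry `PeirceSystem.swap`
would need the idempotent `1 - e`, which does not exist in a ring without unity. -/
structure PeirceSystem (R : Type*) [NonUnitalNonAssocRing R] where
  R₁₁ : AddSubgroup R
  R₁₂ : AddSubgroup R
  R₂₁ : AddSubgroup R
  R₂₂ : AddSubgroup R
  mul_mem_11_11 {x y : R} : x ∈ R₁₁ → y ∈ R₁₁ → x * y ∈ R₁₁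
  mul_mem_11_12 {x y : R} : x ∈ R₁₁ → y ∈ R₁₂ → x * y ∈ R₁₂
  mul_eq_zero_11_21 {x y : R} : x ∈ R₁₁ → y ∈ R₂₁ → x * y = 0
  mul_eq_zero_11_22 {x y : R} : x ∈ R₁₁ → y ∈ R₂₂ → x * y = 0
  mul_eq_zero_12_11 {x y : R} : x ∈ R₁₂ → y ∈ R₁₁ → x * y = 0
  mul_mem_12_12 {x y : R} : x ∈ R₁₂ → y ∈ R₁₂ → x * y ∈ R₂₁
  mul_mem_12_21 {x y : R} : x ∈ R₁₂ → y ∈ R₂₁ → x * y ∈ R₁₁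
  mul_mem_12_22 {x y : R} : x ∈ R₁₂ → y ∈ R₂₂ → x * y ∈ R₁₂
  mul_mem_21_11 {x y : R} : x ∈ R₂₁ → y ∈ R₁₁ → x * y ∈ R₂₁
  mul_mem_21_12 {x y : R} : x ∈ R₂₁ → y ∈ R₁₂ → x * y ∈ R₂₂
  mul_mem_21_21 {x y : R} : x ∈ R₂₁ → y ∈ R₂₁ → x * y ∈ R₁₂
  mul_eq_zero_21_22 {x y : R} : x ∈ R₂₁ → y ∈ R₂₂ → x * y = 0
  mul_eq_zero_22_11 {x y : R} : x ∈ R₂₂ → y ∈ R₁₁ → x * y = 0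
  mul_eq_zero_22_12 {x y : R} : x ∈ R₂₂ → y ∈ R₁₂ → x * y = 0
  mul_mem_22_21 {x y : R} : x ∈ R₂₂ → y ∈ R₂₁ → x * y ∈ R₂₁
  mul_mem_22_22 {x y : R} : x ∈ R₂₂ → y ∈ R₂₂ → x * y ∈ R₂₂
  mul_self_12 {x : R} : x ∈ R₁₂ → x * x = 0
  mul_self_21 {x : R} : x ∈ R₂₁ → x * x = 0
  exists_add_eq (x : R) : ∃ p ∈ R₁₁, ∃ q ∈ R₁₂, ∃ u ∈ R₂₁, ∃ v ∈ R₂₂, p + q + u + v = x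
  eq_zero_of_mem_11_22 {x : R} : x ∈ R₁₁ → x ∈ R₂₂ → x = 0

namespace PeirceSystem

variable {R : Type*} [NonUnitalNonAssocRing R] (c : PeirceSystem R)

open AddSubgroup

def swap : PeirceSystem R where
  R₁₁ := c.R₂₂
  R₁₂ := c.R₂₁
  R₂₁ := c.R₁₂
  R₂₂ := c.R₁₁
  mul_mem_11_11 := c.mul_mem_22_22
  mul_mem_11_12 := c.mul_mem_22_21
  mul_eq_zero_11_21 := c.mul_eq_zero_22_12
  mul_eq_zero_11_22 := c.mul_eq_zero_22_11
  mul_eq_zero_12_11 := c.mul_eq_zero_21_22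
  mul_mem_12_12 := c.mul_mem_21_21
  mul_mem_12_21 := c.mul_mem_21_12
  mul_mem_12_22 := c.mul_mem_21_11
  mul_mem_21_11 := c.mul_mem_12_22
  mul_mem_21_12 := c.mul_mem_12_21
  mul_mem_21_21 := c.mul_mem_12_12
  mul_eq_zero_21_22 := c.mul_eq_zero_12_11
  mul_eq_zero_22_11 := c.mul_eq_zero_11_22
  mul_eq_zero_22_12 := c.mul_eq_zero_11_21
  mul_mem_22_21 := c.mul_mem_11_12
  mul_mem_22_22 := c.mul_mem_11_11
  mul_self_12 := c.mul_self_21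
  mul_self_21 := c.mul_self_12
  exists_add_eq x := by
    obtain ⟨p, hp, q, hq, u, hu, v, hv, rfl⟩ := c.exists_add_eq x
    exact ⟨v, hv, u, hu, q, hq, p, hp, by abel⟩
  eq_zero_of_mem_11_22 hx hx' := c.eq_zero_of_mem_11_22 hx' hx

theorem mul_anticomm_12 {x y : R} (hx : x ∈ c.R₁₂) (hy : y ∈ c.R₁₂) : x * y = -(y * x) := by
  have h := c.mul_self_12 (add_mem hx hy)
  rw [add_mul, mul_add, mul_add, c.mul_self_12 hx, c.mul_self_12 hy, zero_add, add_zero] at h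
  exact eq_neg_of_add_eq_zero_left h

theorem mul_anticomm_21 {x y : R} (hx : x ∈ c.R₂₁) (hy : y ∈ c.R₂₁) : x * y = -(y * x) :=
  c.swap.mul_anticomm_12 hx hy

theorem isIdealSet_closure {s : Set R}
    (h : ∀ g ∈ s, ∀ r, r ∈ c.R₁₁ ∨ r ∈ c.R₁₂ ∨ r ∈ c.R₂₁ ∨ r ∈ c.R₂₂ →
      r * g ∈ closure s ∧ g * r ∈ closure s) :
    IsIdealSet (closure s : Set R) := by
  refine _root_.isIdealSet_closure fun r g hg => ?_
  obtain ⟨p, hp, q, hq, u, hu, v, hv, rfl⟩ := c.exists_add_eq r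
  have h₁ := h g hg p (Or.inl hp)
  have h₂ := h g hg q (Or.inr (Or.inl hq))
  have h₃ := h g hg u (Or.inr (Or.inr (Or.inl hu)))
  have h₄ := h g hg v (Or.inr (Or.inr (Or.inr hv)))
  simp only [add_mul, mul_add]
  exact ⟨add_mem (add_mem (add_mem h₁.1 h₂.1) h₃.1) h₄.1,
    add_mem (add_mem (add_mem h₁.2 h₂.2) h₃.2) h₄.2⟩

section Associativity

variable {c} (halt : IsAlt R)
include halt

theorem mul_assoc_11_12_21 {h u v : R} (hh : h ∈ c.R₁₁) (hu : u ∈ c.R₁₂) (hv : v ∈ c.R₂₁) :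
    h * u * v = h * (u * v) := by
  simpa [c.mul_eq_zero_12_11 hu hh, c.mul_eq_zero_11_21 hh hv] using
    (halt.mul_mul_eq_left h u v).symm

theorem mul_assoc_12_21_11 {u v h : R} (hu : u ∈ c.R₁₂) (hv : v ∈ c.R₂₁) (hh : h ∈ c.R₁₁) :
    u * v * h = u * (v * h) := by
  simpa [c.mul_eq_zero_12_11 hu hh, c.mul_eq_zero_11_21 hh hv] using
    halt.mul_mul_eq_right u v h

theorem mul_assoc_11_12_22 {h s q : R} (hh : h ∈ c.R₁₁) (hs : s ∈ c.R₁₂) (hq : q ∈ c.R₂₂) :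
    h * s * q = h * (s * q) := by
  simpa [c.mul_eq_zero_12_11 hs hh, c.mul_eq_zero_11_22 hh hq] using
    (halt.mul_mul_eq_left h s q).symm

theorem mul_assoc_12_22_22 {s x y : R} (hs : s ∈ c.R₁₂) (hx : x ∈ c.R₂₂) (hy : y ∈ c.R₂₂) :
    s * x * y = s * (x * y) := by
  simpa [c.mul_eq_zero_22_12 hx hs, c.mul_eq_zero_22_12 hx (c.mul_mem_12_22 hs hy)] using
    (halt.mul_mul_eq_left s x y).symm

theorem mul_assoc_22_21_12 {r p w : R} (hr : r ∈ c.R₂₂) (hp : p ∈ c.R₂₁) (hw : w ∈ c.R₁₂) :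
    r * p * w = r * (p * w) := by
  simpa [c.mul_eq_zero_21_22 hp hr, c.mul_eq_zero_22_12 hr hw] using
    (halt.mul_mul_eq_left r p w).symm

theorem mul_assoc_21_11_12 {y h s : R} (hy : y ∈ c.R₂₁) (hh : h ∈ c.R₁₁) (hs : s ∈ c.R₁₂) :
    y * h * s = y * (h * s) := by
  simpa [c.mul_eq_zero_11_21 hh hy, c.mul_eq_zero_11_22 hh (c.mul_mem_21_12 hy hs)] using
    (halt.mul_mul_eq_left y h s).symm

theorem mul_11_12_mul_12 {h s v : R} (hh : h ∈ c.R₁₁) (hs : s ∈ c.R₁₂) (hv : v ∈ c.R₁₂) :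
    h * s * v = s * (h * v) := by
  have := halt.mul_mul_eq_left h s v
  rw [c.mul_eq_zero_11_21 hh (c.mul_mem_12_12 hs hv), c.mul_eq_zero_12_11 hs hh, zero_mul,
    add_zero] at this
  exact sub_eq_zero.1 this.symm

theorem mul_12_22_mul_12 {s v r : R} (hs : s ∈ c.R₁₂) (hv : v ∈ c.R₁₂) (hr : r ∈ c.R₂₂) :
    s * r * v = s * (v * r) := by
  simpa [c.mul_eq_zero_22_12 hr hv, c.mul_eq_zero_21_22 (c.mul_mem_12_12 hs hv) hr] using
    halt.mul_mul_eq_right s r v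

theorem mul_12_12_mul_11 {u v h : R} (hu : u ∈ c.R₁₂) (hv : v ∈ c.R₁₂) (hh : h ∈ c.R₁₁) :
    u * v * h = u * (h * v) := by
  simpa [c.mul_eq_zero_12_11 hv hh, c.mul_eq_zero_12_11 hu hh] using
    halt.mul_mul_eq_right u v h

theorem mul_22_mul_12_12 {r u v : R} (hr : r ∈ c.R₂₂) (hu : u ∈ c.R₁₂) (hv : v ∈ c.R₁₂) :
    r * (u * v) = u * (v * r) := by
  have := halt.mul_mul_eq_left r u v
  rw [c.mul_eq_zero_22_12 hr hu, c.mul_eq_zero_22_12 hr hv, zero_mul, zero_add, mul_zero,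
    sub_zero] at this
  rw [this, mul_12_22_mul_12 halt hu hv hr]

end Associativity

/-- The ideal generated by `R₁₂ + R₂₁ + R₂₂`. -/
def outerIdeal : AddSubgroup R :=
  closure {x | x ∈ c.R₁₂ ∨ x ∈ c.R₂₁ ∨ x ∈ c.R₂₂ ∨ ∃ b ∈ c.R₁₂, ∃ u ∈ c.R₂₁, b * u = x}

theorem isIdealSet_outerIdeal (halt : IsAlt R) : IsIdealSet (c.outerIdeal : Set R) := by
  refine c.isIdealSet_closure ?_
  have m₁₂ {x : R} (hx : x ∈ c.R₁₂) : x ∈ c.outerIdeal := subset_closure (Or.inl hx)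
  have m₂₁ {x : R} (hx : x ∈ c.R₂₁) : x ∈ c.outerIdeal := subset_closure (Or.inr (Or.inl hx))
  have m₂₂ {x : R} (hx : x ∈ c.R₂₂) : x ∈ c.outerIdeal :=
    subset_closure (Or.inr (Or.inr (Or.inl hx)))
  have m₁₁ {b u : R} (hb : b ∈ c.R₁₂) (hu : u ∈ c.R₂₁) : b * u ∈ c.outerIdeal :=
    subset_closure (Or.inr (Or.inr (Or.inr ⟨b, hb, u, hu, rfl⟩)))
  have z {x : R} (hx : x = 0) : x ∈ c.outerIdeal := hx ▸ zero_mem _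
  rintro g (hg | hg | hg | ⟨b, hb, u, hu, rfl⟩) r (hr | hr | hr | hr)
  · exact ⟨m₁₂ (c.mul_mem_11_12 hr hg), z (c.mul_eq_zero_12_11 hg hr)⟩
  · exact ⟨m₂₁ (c.mul_mem_12_12 hr hg), m₂₁ (c.mul_mem_12_12 hg hr)⟩
  · exact ⟨m₂₂ (c.mul_mem_21_12 hr hg), m₁₁ hg hr⟩
  · exact ⟨z (c.mul_eq_zero_22_12 hr hg), m₁₂ (c.mul_mem_12_22 hg hr)⟩
  · exact ⟨z (c.mul_eq_zero_11_21 hr hg), m₂₁ (c.mul_mem_21_11 hg hr)⟩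
  · exact ⟨m₁₁ hr hg, m₂₂ (c.mul_mem_21_12 hg hr)⟩
  · exact ⟨m₁₂ (c.mul_mem_21_21 hr hg), m₁₂ (c.mul_mem_21_21 hg hr)⟩
  · exact ⟨m₂₁ (c.mul_mem_22_21 hr hg), z (c.mul_eq_zero_21_22 hg hr)⟩
  · exact ⟨z (c.mul_eq_zero_11_22 hr hg), z (c.mul_eq_zero_22_11 hg hr)⟩
  · exact ⟨m₁₂ (c.mul_mem_12_22 hr hg), z (c.mul_eq_zero_22_12 hg hr)⟩
  · exact ⟨z (c.mul_eq_zero_21_22 hr hg), m₂₁ (c.mul_mem_22_21 hg hr)⟩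
  · exact ⟨m₂₂ (c.mul_mem_22_22 hr hg), m₂₂ (c.mul_mem_22_22 hg hr)⟩
  · rw [← mul_assoc_11_12_21 halt hr hb hu, mul_assoc_12_21_11 halt hb hu hr]
    exact ⟨m₁₁ (c.mul_mem_11_12 hr hb) hu, m₁₁ hb (c.mul_mem_21_11 hu hr)⟩
  · exact ⟨z (c.mul_eq_zero_12_11 hr (c.mul_mem_12_21 hb hu)),
      m₁₂ (c.mul_mem_11_12 (c.mul_mem_12_21 hb hu) hr)⟩
  · exact ⟨m₂₁ (c.mul_mem_21_11 hr (c.mul_mem_12_21 hb hu)),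
      z (c.mul_eq_zero_11_21 (c.mul_mem_12_21 hb hu) hr)⟩
  · exact ⟨z (c.mul_eq_zero_22_11 hr (c.mul_mem_12_21 hb hu)),
      z (c.mul_eq_zero_11_22 (c.mul_mem_12_21 hb hu) hr)⟩

theorem outerIdeal_ne_bot (h : c.R₁₁ ≠ ⊤) : c.outerIdeal ≠ ⊥ := by
  refine fun hW => h (eq_top_iff.2 fun x _ => ?_)
  have h₀ {y : R} (hy : y ∈ c.R₁₂ ∨ y ∈ c.R₂₁ ∨ y ∈ c.R₂₂) : y = 0 := by
    refine mem_bot.1 (hW ▸ subset_closure ?_)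
    rcases hy with hy | hy | hy
    exacts [Or.inl hy, Or.inr (Or.inl hy), Or.inr (Or.inr (Or.inl hy))]
  obtain ⟨p, hp, q, hq, u, hu, v, hv, rfl⟩ := c.exists_add_eq x
  rwa [h₀ (Or.inl hq), h₀ (Or.inr (Or.inl hu)), h₀ (Or.inr (Or.inr hv)), add_zero, add_zero,
    add_zero]

inductive Gen₁₂ (c : PeirceSystem R) (a : R) : R → Prop
  | self : Gen₁₂ c a a
  | mul_left {h s : R} : h ∈ c.R₁₁ → Gen₁₂ c a s → Gen₁₂ c a (h * s)
  | mul_right {s r : R} : r ∈ c.R₂₂ → Gen₁₂ c a s → Gen₁₂ c a (s * r)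

inductive Gen₂₂ (c : PeirceSystem R) (a : R) : R → Prop
  | mul_21 {y : R} : y ∈ c.R₂₁ → Gen₂₂ c a (y * a)
  | mul_12_12 {v w : R} : v ∈ c.R₁₂ → w ∈ c.R₁₂ → Gen₂₂ c a (a * v * w)
  | mul_left {r q : R} : r ∈ c.R₂₂ → Gen₂₂ c a q → Gen₂₂ c a (r * q)
  | mul_right {q r : R} : r ∈ c.R₂₂ → Gen₂₂ c a q → Gen₂₂ c a (q * r)

/-- For `a ∈ R₁₂` with `a R₂₁ = 0` this is the ideal generated by `a`: `Gen₁₂ a`, `a R₁₂` and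
`Gen₂₂ a` span its `R₁₂`-, `R₂₁`- and `R₂₂`-components, and its `R₁₁`-component vanishes. -/
def idealOf (a : R) : AddSubgroup R :=
  closure {x | c.Gen₁₂ a x ∨ (∃ v ∈ c.R₁₂, a * v = x) ∨ c.Gen₂₂ a x}

variable {c}

section IdealOf

variable {a : R}

theorem Gen₁₂.mem_12 (ha : a ∈ c.R₁₂) {s : R} (hs : c.Gen₁₂ a s) : s ∈ c.R₁₂ := by
  induction hs with
  | self => exact ha
  | mul_left hh _ ih => exact c.mul_mem_11_12 hh ih
  | mul_right hr _ ih => exact c.mul_mem_12_22 ih hr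

theorem Gen₂₂.mem_22 (ha : a ∈ c.R₁₂) {q : R} (hq : c.Gen₂₂ a q) : q ∈ c.R₂₂ := by
  induction hq with
  | mul_21 hy => exact c.mul_mem_21_12 hy ha
  | mul_12_12 hv hw => exact c.mul_mem_21_12 (c.mul_mem_12_12 ha hv) hw
  | mul_left hr _ ih => exact c.mul_mem_22_22 hr ih
  | mul_right hr _ ih => exact c.mul_mem_22_22 ih hr

theorem closure_gen₁₂_le (ha : a ∈ c.R₁₂) : AddSubgroup.closure {s | c.Gen₁₂ a s} ≤ c.R₁₂ :=
  (closure_le _).2 fun _ hs => Gen₁₂.mem_12 ha hs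

theorem mul_mem_closure_gen₁₂ {x r : R} (hx : x ∈ AddSubgroup.closure {s | c.Gen₁₂ a s})
    (hr : r ∈ c.R₂₂) : x * r ∈ AddSubgroup.closure {s | c.Gen₁₂ a s} :=
  (closure_le ((AddSubgroup.closure _).comap (AddMonoidHom.mulRight r))).2
    (fun _ hs => subset_closure (Gen₁₂.mul_right hr hs)) hx

variable (halt : IsAlt R) (ha : a ∈ c.R₁₂)
include halt ha

theorem Gen₁₂.mul_self_eq_zero {s : R} (hs : c.Gen₁₂ a s) : s * a = 0 := by
  induction hs with
  | self => exact c.mul_self_12 ha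
  | @mul_left h s hh _ ih =>
    simpa [associator_apply, ih, c.mul_eq_zero_12_11 ha hh] using
      (halt.associator_cycle h s a).symm
  | @mul_right s r hr hs ih =>
    have has : a * s = 0 := by rw [c.mul_anticomm_12 ha (hs.mem_12 ha), ih, neg_zero]
    simpa [associator_apply, has, c.mul_eq_zero_22_12 hr ha] using
      (halt.associator_cycle s r a).symm

theorem Gen₁₂.exists_mul_eq {s : R} (hs : c.Gen₁₂ a s) :
    ∀ v ∈ c.R₁₂, ∃ v' ∈ c.R₁₂, s * v = a * v' := by
  induction hs with
  | self => exact fun v hv => ⟨v, hv, rfl⟩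
  | mul_left hh hs ih =>
    intro v hv
    obtain ⟨v', hv', h⟩ := ih _ (c.mul_mem_11_12 hh hv)
    exact ⟨v', hv', by rw [mul_11_12_mul_12 halt hh (hs.mem_12 ha) hv, h]⟩
  | mul_right hr hs ih =>
    intro v hv
    obtain ⟨v', hv', h⟩ := ih _ (c.mul_mem_12_22 hv hr)
    exact ⟨v', hv', by rw [mul_12_22_mul_12 halt (hs.mem_12 ha) hv hr, h]⟩

variable (ha₂₁ : ∀ y ∈ c.R₂₁, a * y = 0)
include ha₂₁

theorem Gen₁₂.mul_eq_zero_of_mem_21 {s : R} (hs : c.Gen₁₂ a s) : ∀ y ∈ c.R₂₁, s * y = 0 := by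
  induction hs with
  | self => exact ha₂₁
  | @mul_left h s hh hs ih =>
    intro y hy
    simpa [ih y hy, c.mul_eq_zero_12_11 (hs.mem_12 ha) hh, c.mul_eq_zero_11_21 hh hy] using
      (halt.mul_mul_eq_left h s y).symm
  | @mul_right s r hr hs ih =>
    intro y hy
    simpa [ih y hy, ih _ (c.mul_mem_22_21 hr hy), c.mul_eq_zero_22_12 hr (hs.mem_12 ha)] using
      (halt.mul_mul_eq_left s r y).symm

theorem mul_12_mul_21 {v y : R} (hv : v ∈ c.R₁₂) (hy : y ∈ c.R₂₁) : a * v * y = a * (y * v) := by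
  simpa [ha₂₁ y hy, c.mul_eq_zero_12_11 ha (c.mul_mem_12_21 hv hy)] using
    halt.mul_mul_eq_right a v y

theorem mul_mul_12_eq_zero {u v : R} (hu : u ∈ c.R₁₂) (hv : v ∈ c.R₁₂) : u * (a * v) = 0 := by
  have h := halt.mul_mul_eq_left a u v
  rw [ha₂₁ _ (c.mul_mem_12_12 hu hv)] at h
  have h' : u * (a * v) = a * u * v + u * a * v := by linear_combination (norm := abel) h
  -- `u * (a * v)` lies in `R₁₁`, while `h'` places it in `R₂₂`
  refine c.eq_zero_of_mem_11_22 (c.mul_mem_12_21 hu (c.mul_mem_12_12 ha hv)) (h' ▸ add_mem ?_ ?_)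
  · exact c.mul_mem_21_12 (c.mul_mem_12_12 ha hu) hv
  · exact c.mul_mem_21_12 (c.mul_mem_12_12 hu ha) hv

theorem mul_mul_12_12_eq_zero {v w : R} (hv : v ∈ c.R₁₂) (hw : w ∈ c.R₁₂) :
    a * (a * v * w) = 0 := by
  have hav := c.mul_mem_12_12 ha hv
  calc a * (a * v * w) = -(a * v * (a * w)) := by
        simpa [ha₂₁ _ hav, c.mul_eq_zero_22_12 (c.mul_mem_21_12 hav ha) hw] using
          halt.mul_mul_eq_left a (a * v) w
    _ = a * v * (w * a) := by rw [c.mul_anticomm_12 ha hw, mul_neg, neg_neg]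
    _ = 0 := by rw [halt.moufang_middle, ha₂₁ _ (c.mul_mem_12_12 hv hw), zero_mul]

theorem Gen₁₂.mul_mul_12_12_eq_zero {s : R} (hs : c.Gen₁₂ a s) :
    ∀ v ∈ c.R₁₂, ∀ w ∈ c.R₁₂, s * (a * v * w) = 0 := by
  induction hs with
  | self => exact fun v hv w hw => PeirceSystem.mul_mul_12_12_eq_zero halt ha ha₂₁ hv hw
  | mul_left hh hs ih =>
    intro v hv w hw
    rw [mul_assoc_11_12_22 halt hh (hs.mem_12 ha)
      (c.mul_mem_21_12 (c.mul_mem_12_12 ha hv) hw), ih v hv w hw, mul_zero]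
  | mul_right hr hs ih =>
    intro v hv w hw
    rw [mul_assoc_12_22_22 halt (hs.mem_12 ha) hr (c.mul_mem_21_12 (c.mul_mem_12_12 ha hv) hw),
      ← mul_assoc_22_21_12 halt hr (c.mul_mem_12_12 ha hv) hw, mul_22_mul_12_12 halt hr ha hv]
    exact ih _ (c.mul_mem_12_22 hv hr) w hw

theorem Gen₂₂.mul_eq_zero {q : R} (hq : c.Gen₂₂ a q) {s : R} (hs : c.Gen₁₂ a s) : s * q = 0 := by
  induction hq generalizing s with
  | @mul_21 y hy =>
    simpa [hs.mul_eq_zero_of_mem_21 halt ha ha₂₁ y hy, hs.mul_self_eq_zero halt ha,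
      c.mul_eq_zero_22_12 (c.mul_mem_21_12 hy (hs.mem_12 ha)) ha] using
      halt.mul_mul_eq_left s y a
  | mul_12_12 hv hw => exact hs.mul_mul_12_12_eq_zero halt ha ha₂₁ _ hv _ hw
  | mul_left hr hq ih =>
    rw [← mul_assoc_12_22_22 halt (hs.mem_12 ha) hr (hq.mem_22 ha)]
    exact ih (Gen₁₂.mul_right hr hs)
  | mul_right hr hq ih =>
    rw [← mul_assoc_12_22_22 halt (hs.mem_12 ha) (hq.mem_22 ha) hr, ih hs, zero_mul]

theorem Gen₁₂.gen₂₂_mul {s : R} (hs : c.Gen₁₂ a s) : ∀ y ∈ c.R₂₁, c.Gen₂₂ a (y * s) := by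
  induction hs with
  | self => exact fun y hy => Gen₂₂.mul_21 hy
  | mul_left hh hs ih =>
    intro y hy
    rw [← mul_assoc_21_11_12 halt hy hh (hs.mem_12 ha)]
    exact ih _ (c.mul_mem_21_11 hy hh)
  | @mul_right s r hr hs ih =>
    intro y hy
    have h : y * (s * r) = y * s * r := by
      simpa [hs.mul_eq_zero_of_mem_21 halt ha ha₂₁ y hy, c.mul_eq_zero_21_22 hy hr] using
        halt.mul_mul_eq_left y s r
    rw [h]
    exact Gen₂₂.mul_right hr (ih y hy)

theorem Gen₂₂.exists_mul_eq {q : R} (hq : c.Gen₂₂ a q) :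
    ∀ y ∈ c.R₂₁, ∃ v ∈ c.R₁₂, q * y = a * v := by
  induction hq with
  | @mul_21 z hz =>
    intro y hy
    have h := halt.mul_mul_eq_left z a y
    rw [ha₂₁ y hy, ha₂₁ z hz, mul_zero, zero_mul, add_zero] at h
    exact ⟨z * y, c.mul_mem_21_21 hz hy, sub_eq_zero.1 h.symm⟩
  | @mul_12_12 v w hv hw =>
    intro y hy
    have hav := c.mul_mem_12_12 ha hv
    have hs : c.Gen₁₂ a (a * (y * v)) := Gen₁₂.mul_right (c.mul_mem_21_12 hy hv) Gen₁₂.self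
    obtain ⟨v', hv', h⟩ := hs.exists_mul_eq halt ha w hw
    have key : a * v * w * y = a * v * (w * y) + w * (a * v * y) := by
      have := halt.mul_mul_eq_left (a * v) w y
      rw [mul_mul_12_eq_zero halt ha ha₂₁ hw hv, zero_mul, add_zero] at this
      rw [this]; abel
    refine ⟨w * y * v - v', sub_mem (c.mul_mem_11_12 (c.mul_mem_12_21 hw hy) hv) hv', ?_⟩
    rw [key, mul_12_12_mul_11 halt ha hv (c.mul_mem_12_21 hw hy), mul_12_mul_21 halt ha ha₂₁ hv hy,
      c.mul_anticomm_12 hw (hs.mem_12 ha), h, mul_sub, sub_eq_add_neg]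
  | @mul_left r q hr hq ih =>
    intro y hy
    obtain ⟨v, hv, h⟩ := ih y hy
    have hyr := halt.associator_cycle r q y
    rw [associator_apply, associator_apply, c.mul_eq_zero_21_22 hy hr,
      c.mul_eq_zero_21_22 (c.mul_mem_22_21 (hq.mem_22 ha) hy) hr, mul_zero, sub_zero, eq_comm,
      sub_eq_zero, h, mul_22_mul_12_12 halt hr ha hv] at hyr
    exact ⟨v * r, c.mul_mem_12_22 hv hr, hyr⟩
  | @mul_right q r hr hq ih =>
    intro y hy
    have hyr := halt.associator_swap_right q r y
    rw [associator_apply, associator_apply, c.mul_eq_zero_21_22 hy hr,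
      c.mul_eq_zero_21_22 (c.mul_mem_22_21 (hq.mem_22 ha) hy) hr, mul_zero, sub_zero, eq_comm,
      neg_eq_zero, sub_eq_zero] at hyr
    rw [hyr]
    exact ih _ (c.mul_mem_22_21 hr hy)

theorem Gen₂₂.mul_mem_closure {q : R} (hq : c.Gen₂₂ a q) :
    ∀ w ∈ c.R₁₂, w * q ∈ AddSubgroup.closure {s | c.Gen₁₂ a s} := by
  induction hq with
  | @mul_21 y hy =>
    intro w hw
    have key : w * (y * a) = w * y * a - a * (y * w) := by
      have := halt.mul_mul_eq_right w y a
      rw [ha₂₁ y hy, mul_zero, add_zero, c.mul_anticomm_12 hw ha, neg_mul,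
        mul_12_mul_21 halt ha ha₂₁ hw hy] at this
      rw [this]; abel
    rw [key]
    exact sub_mem (subset_closure (Gen₁₂.mul_left (c.mul_mem_12_21 hw hy) Gen₁₂.self))
      (subset_closure (Gen₁₂.mul_right (c.mul_mem_21_12 hy hw) Gen₁₂.self))
  | @mul_12_12 v w₁ hv hw₁ =>
    intro w hw
    have key : w * (a * v * w₁) = -(a * (w * w₁ * v)) := by
      rw [← mul_12_mul_21 halt ha ha₂₁ hv (c.mul_mem_12_12 hw hw₁)]
      simpa [mul_mul_12_eq_zero halt ha ha₂₁ hw hv,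
        c.mul_eq_zero_22_12 (c.mul_mem_21_12 (c.mul_mem_12_12 ha hv) hw) hw₁] using
        halt.mul_mul_eq_left w (a * v) w₁
    rw [key]
    exact neg_mem (subset_closure
      (Gen₁₂.mul_right (c.mul_mem_21_12 (c.mul_mem_12_12 hw hw₁) hv) Gen₁₂.self))
  | @mul_left r q hr hq ih =>
    intro w hw
    have h : w * (r * q) = w * r * q := by
      simpa [c.mul_eq_zero_22_12 hr hw, c.mul_eq_zero_22_12 hr (closure_gen₁₂_le ha (ih w hw))]
        using halt.mul_mul_eq_left w r q
    rw [h]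
    exact ih _ (c.mul_mem_12_22 hw hr)
  | @mul_right q r hr hq ih =>
    intro w hw
    have h := halt.associator_cycle w q r
    rw [associator_apply, associator_apply,
      c.mul_eq_zero_22_12 (c.mul_mem_22_22 (hq.mem_22 ha) hr) hw, c.mul_eq_zero_22_12 hr hw,
      mul_zero, sub_zero, eq_comm, sub_eq_zero] at h
    rw [← h]
    exact mul_mem_closure_gen₁₂ (ih w hw) hr

theorem isIdealSet_idealOf : IsIdealSet (c.idealOf a : Set R) := by
  refine c.isIdealSet_closure ?_
  have m₁₂ {s : R} (hs : c.Gen₁₂ a s) : s ∈ c.idealOf a := subset_closure (Or.inl hs)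
  have m₂₁ {v : R} (hv : v ∈ c.R₁₂) : a * v ∈ c.idealOf a :=
    subset_closure (Or.inr (Or.inl ⟨v, hv, rfl⟩))
  have m₂₂ {q : R} (hq : c.Gen₂₂ a q) : q ∈ c.idealOf a := subset_closure (Or.inr (Or.inr hq))
  have z {x : R} (hx : x = 0) : x ∈ c.idealOf a := hx ▸ zero_mem _
  rintro g (hs | ⟨v, hv, rfl⟩ | hq) r (hr | hr | hr | hr)
  · exact ⟨m₁₂ (Gen₁₂.mul_left hr hs), z (c.mul_eq_zero_12_11 (hs.mem_12 ha) hr)⟩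
  · obtain ⟨v', hv', h⟩ := hs.exists_mul_eq halt ha r hr
    rw [c.mul_anticomm_12 hr (hs.mem_12 ha), h]
    exact ⟨neg_mem (m₂₁ hv'), m₂₁ hv'⟩
  · exact ⟨m₂₂ (hs.gen₂₂_mul halt ha ha₂₁ r hr), z (hs.mul_eq_zero_of_mem_21 halt ha ha₂₁ r hr)⟩
  · exact ⟨z (c.mul_eq_zero_22_12 hr (hs.mem_12 ha)), m₁₂ (Gen₁₂.mul_right hr hs)⟩
  · rw [mul_12_12_mul_11 halt ha hv hr]
    exact ⟨z (c.mul_eq_zero_11_21 hr (c.mul_mem_12_12 ha hv)), m₂₁ (c.mul_mem_11_12 hr hv)⟩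
  · exact ⟨z (mul_mul_12_eq_zero halt ha ha₂₁ hr hv), m₂₂ (Gen₂₂.mul_12_12 hv hr)⟩
  · rw [c.mul_anticomm_21 hr (c.mul_mem_12_12 ha hv), mul_12_mul_21 halt ha ha₂₁ hv hr]
    have hs : c.Gen₁₂ a (a * (r * v)) := Gen₁₂.mul_right (c.mul_mem_21_12 hr hv) Gen₁₂.self
    exact ⟨neg_mem (m₁₂ hs), m₁₂ hs⟩
  · rw [mul_22_mul_12_12 halt hr ha hv]
    exact ⟨m₂₁ (c.mul_mem_12_22 hv hr), z (c.mul_eq_zero_21_22 (c.mul_mem_12_12 ha hv) hr)⟩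
  · exact ⟨z (c.mul_eq_zero_11_22 hr (hq.mem_22 ha)), z (c.mul_eq_zero_22_11 (hq.mem_22 ha) hr)⟩
  · exact ⟨closure_mono (fun _ => Or.inl) (hq.mul_mem_closure halt ha ha₂₁ r hr),
      z (c.mul_eq_zero_22_12 (hq.mem_22 ha) hr)⟩
  · obtain ⟨v, hv, h⟩ := hq.exists_mul_eq halt ha ha₂₁ r hr
    rw [h]
    exact ⟨z (c.mul_eq_zero_21_22 hr (hq.mem_22 ha)), m₂₁ hv⟩
  · exact ⟨m₂₂ (Gen₂₂.mul_left hr hq), m₂₂ (Gen₂₂.mul_right hr hq)⟩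

theorem mul_idealOf_eq_zero : ∀ i ∈ c.idealOf a, a * i = 0 := by
  refine fun i hi => mul_closure_eq_zero ?_ hi
  rintro g (hs | ⟨v, hv, rfl⟩ | hq)
  · rw [c.mul_anticomm_12 ha (hs.mem_12 ha), hs.mul_self_eq_zero halt ha, neg_zero]
  · exact ha₂₁ _ (c.mul_mem_12_12 ha hv)
  · exact hq.mul_eq_zero halt ha ha₂₁ Gen₁₂.self

end IdealOf

section Prime

variable (c) (halt : IsAlt R) (hprime : IsPrimeRing R)
include halt hprime

theorem eq_zero_of_mem_11_of_mul_12 (h : c.R₁₁ ≠ ⊤) :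
    ∀ x ∈ c.R₁₁, (∀ y ∈ c.R₁₂, x * y = 0) → x = 0 := by
  intro x hx hx₁₂
  refine hprime.eq_zero_of_mul_ideal_eq_zero halt (c.isIdealSet_outerIdeal halt)
    (c.outerIdeal_ne_bot h) fun i hi => mul_closure_eq_zero ?_ hi
  rintro g (hg | hg | hg | ⟨b, hb, u, hu, rfl⟩)
  · exact hx₁₂ g hg
  · exact c.mul_eq_zero_11_21 hx hg
  · exact c.mul_eq_zero_11_22 hx hg
  · rw [← mul_assoc_11_12_21 halt hx hb hu, hx₁₂ b hb, zero_mul]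

theorem eq_zero_of_mem_11_of_21_mul (h : c.R₁₁ ≠ ⊤) :
    ∀ x ∈ c.R₁₁, (∀ y ∈ c.R₂₁, y * x = 0) → x = 0 := by
  intro x hx hx₂₁
  refine hprime.eq_zero_of_ideal_mul_eq_zero halt (c.isIdealSet_outerIdeal halt)
    (c.outerIdeal_ne_bot h) fun i hi => closure_mul_eq_zero ?_ hi
  rintro g (hg | hg | hg | ⟨b, hb, u, hu, rfl⟩)
  · exact c.mul_eq_zero_12_11 hg hx
  · exact hx₂₁ g hg
  · exact c.mul_eq_zero_22_11 hg hx
  · rw [mul_assoc_12_21_11 halt hb hu hx, hx₂₁ u hu, mul_zero]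

theorem eq_zero_of_mem_12_of_mul_21 :
    ∀ x ∈ c.R₁₂, (∀ y ∈ c.R₂₁, x * y = 0) → x = 0 := by
  intro a ha ha₂₁
  by_contra ha0
  have haI : a ∈ c.idealOf a := subset_closure (Or.inl Gen₁₂.self)
  exact ha0 (hprime.eq_zero_of_mul_ideal_eq_zero halt (isIdealSet_idealOf halt ha ha₂₁)
    (fun h => ha0 (mem_bot.1 (h ▸ haI))) (mul_idealOf_eq_zero halt ha ha₂₁))

end Prime

end PeirceSystem

namespace IsAlt

variable {R : Type*} [NonUnitalNonAssocRing R] (halt : IsAlt R) {e : R} (he : e * e = e)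
include halt he

theorem exists_add_eq_peirce (x : R) :
    ∃ p ∈ P11 e, ∃ q ∈ P12 e, ∃ u ∈ P21 e, ∃ v ∈ P22 e, p + q + u + v = x := by
  have hl (w : R) : e * (e * w) = e * w := by rw [← (halt e w).1, he]
  have hr (w : R) : w * e * e = w * e := by rw [(halt e w).2, he]
  have hflex : e * x * e = e * (x * e) := by
    have h := halt.associator_swap_right e e x
    rwa [halt.associator_self_left, neg_zero, associator_apply, sub_eq_zero] at h
  refine ⟨e * (x * e), ⟨?_, ?_⟩, e * x - e * (x * e), ⟨?_, ?_⟩, x * e - e * (x * e), ⟨?_, ?_⟩,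
    x - e * x - x * e + e * (x * e), ⟨?_, ?_⟩, by abel⟩
  · exact hl _
  · rw [← hflex, hr, hflex]
  · rw [mul_sub, hl, hl]
  · rw [sub_mul, ← hflex, hr, hflex, sub_self]
  · rw [mul_sub, hl, sub_self]
  · rw [sub_mul, hr, ← hflex, hr, hflex]
  · rw [mul_add, mul_sub, mul_sub, hl, hl]; abel
  · rw [add_mul, sub_mul, sub_mul, hr, ← hflex, hr]; abel

def peirceSystem : PeirceSystem R where
  R₁₁ :=
    { carrier := P11 e
      add_mem' := fun ha hb => ⟨by simp [mul_add, ha.1, hb.1], by simp [add_mul, ha.2, hb.2]⟩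
      zero_mem' := ⟨mul_zero e, zero_mul e⟩
      neg_mem' := fun ha => ⟨by simp [ha.1], by simp [ha.2]⟩ }
  R₁₂ :=
    { carrier := P12 e
      add_mem' := fun ha hb => ⟨by simp [mul_add, ha.1, hb.1], by simp [add_mul, ha.2, hb.2]⟩
      zero_mem' := ⟨mul_zero e, zero_mul e⟩
      neg_mem' := fun ha => ⟨by simp [ha.1], by simp [ha.2]⟩ }
  R₂₁ :=
    { carrier := P21 e
      add_mem' := fun ha hb => ⟨by simp [mul_add, ha.1, hb.1], by simp [add_mul, ha.2, hb.2]⟩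
      zero_mem' := ⟨mul_zero e, zero_mul e⟩
      neg_mem' := fun ha => ⟨by simp [ha.1], by simp [ha.2]⟩ }
  R₂₂ :=
    { carrier := P22 e
      add_mem' := fun ha hb => ⟨by simp [mul_add, ha.1, hb.1], by simp [add_mul, ha.2, hb.2]⟩
      zero_mem' := ⟨mul_zero e, zero_mul e⟩
      neg_mem' := fun ha => ⟨by simp [ha.1], by simp [ha.2]⟩ }
  mul_mem_11_11 hx hy := ⟨by rw [halt.mul_mul_eq_left, hx.1, hx.2, hy.1]; simp,
    by rw [halt.mul_mul_eq_right, hy.2, hy.1, hx.2]; simp⟩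
  mul_mem_11_12 hx hy := ⟨by rw [halt.mul_mul_eq_left, hx.1, hx.2, hy.1]; simp,
    by rw [halt.mul_mul_eq_right, hy.2, hy.1, hx.2]; simp⟩
  mul_eq_zero_11_21 {x y} hx hy := by
    have h := halt.moufang_left e x y
    rwa [hx.2, hx.1, hy.1, mul_zero, mul_zero] at h
  mul_eq_zero_11_22 {x y} hx hy := by
    have h := halt.moufang_left e x y
    rwa [hx.2, hx.1, hy.1, mul_zero, mul_zero] at h
  mul_eq_zero_12_11 {x y} hx hy := by
    have h := halt.moufang_right e y x
    rw [hx.2, zero_mul, zero_mul, hy.1, hy.2] at h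
    exact h.symm
  mul_mem_12_12 hx hy := ⟨by rw [halt.mul_mul_eq_left, hx.1, hx.2, hy.1]; simp,
    by rw [halt.mul_mul_eq_right, hy.2, hy.1, hx.2]; simp⟩
  mul_mem_12_21 hx hy := ⟨by rw [halt.mul_mul_eq_left, hx.1, hx.2, hy.1]; simp,
    by rw [halt.mul_mul_eq_right, hy.2, hy.1, hx.2]; simp⟩
  mul_mem_12_22 hx hy := ⟨by rw [halt.mul_mul_eq_left, hx.1, hx.2, hy.1]; simp,
    by rw [halt.mul_mul_eq_right, hy.2, hy.1, hx.2]; simp⟩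
  mul_mem_21_11 hx hy := ⟨by rw [halt.mul_mul_eq_left, hx.1, hx.2, hy.1]; simp,
    by rw [halt.mul_mul_eq_right, hy.2, hy.1, hx.2]; simp⟩
  mul_mem_21_12 hx hy := ⟨by rw [halt.mul_mul_eq_left, hx.1, hx.2, hy.1]; simp,
    by rw [halt.mul_mul_eq_right, hy.2, hy.1, hx.2]; simp⟩
  mul_mem_21_21 hx hy := ⟨by rw [halt.mul_mul_eq_left, hx.1, hx.2, hy.1]; simp,
    by rw [halt.mul_mul_eq_right, hy.2, hy.1, hx.2]; simp⟩
  mul_eq_zero_21_22 {x y} hx hy := by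
    have h := halt.moufang_right e y x
    rw [hx.2, hy.1, zero_mul, mul_zero, halt.mul_mul_eq_right, hy.2, hy.1, hx.2] at h
    simpa using h
  mul_eq_zero_22_11 {x y} hx hy := by
    have h := halt.moufang_right e y x
    rw [hx.2, zero_mul, zero_mul, hy.1, hy.2] at h
    exact h.symm
  mul_eq_zero_22_12 {x y} hx hy := by
    have h := halt.moufang_left e x y
    rw [hx.2, mul_zero, zero_mul, hy.1, halt.mul_mul_eq_left, hx.1, hx.2, hy.1] at h
    simpa using h.symm
  mul_mem_22_21 hx hy := ⟨by rw [halt.mul_mul_eq_left, hx.1, hx.2, hy.1]; simp,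
    by rw [halt.mul_mul_eq_right, hy.2, hy.1, hx.2]; simp⟩
  mul_mem_22_22 hx hy := ⟨by rw [halt.mul_mul_eq_left, hx.1, hx.2, hy.1]; simp,
    by rw [halt.mul_mul_eq_right, hy.2, hy.1, hx.2]; simp⟩
  mul_self_12 {x} hx :=
    calc x * x = e * x * x := by rw [hx.1]
      _ = e * (x * x) := (halt x e).2
      _ = 0 := by rw [halt.mul_mul_eq_left, hx.1, hx.2]; simp
  mul_self_21 {x} hx :=
    calc x * x = x * (x * e) := by rw [hx.2]
      _ = x * x * e := ((halt x e).1).symm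
      _ = 0 := by rw [halt.mul_mul_eq_right, hx.2, hx.1]; simp
  exists_add_eq := halt.exists_add_eq_peirce he
  eq_zero_of_mem_11_22 hx hx' := hx.1.symm.trans hx'.1

end IsAlt

theorem stmt8_general {R : Type*} [NonUnitalNonAssocRing R] (halt : IsAlt R)
    (hprime : IsPrimeRing R)
    (e₁ : R) (he : e₁ * e₁ = e₁) (hne : e₁ ≠ 0)
    (hnu : ¬ ∀ x : R, e₁ * x = x ∧ x * e₁ = x) :
    ((∀ x ∈ P12 e₁, (∀ y ∈ P21 e₁, x * y = 0) → x = 0) ∧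
     (∀ x ∈ P21 e₁, (∀ y ∈ P12 e₁, x * y = 0) → x = 0)) ∧
    ((∀ x ∈ P11 e₁, (∀ y ∈ P12 e₁, x * y = 0) → x = 0) ∧
     (∀ x ∈ P11 e₁, (∀ y ∈ P21 e₁, y * x = 0) → x = 0)) ∧
    ((∀ x ∈ P22 e₁, (∀ y ∈ P12 e₁, y * x = 0) → x = 0) ∧
     (∀ x ∈ P22 e₁, (∀ y ∈ P21 e₁, x * y = 0) → x = 0)) := by
  let c := halt.peirceSystem he
  have hc : c.R₁₁ ≠ ⊤ := fun h => hnu fun x => (h ▸ AddSubgroup.mem_top x : x ∈ c.R₁₁)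
  have hcs : c.swap.R₁₁ ≠ ⊤ := fun h =>
    hne (c.eq_zero_of_mem_11_22 ⟨he, he⟩ (h ▸ AddSubgroup.mem_top e₁ : e₁ ∈ c.swap.R₁₁))
  exact ⟨⟨c.eq_zero_of_mem_12_of_mul_21 halt hprime,
      c.swap.eq_zero_of_mem_12_of_mul_21 halt hprime⟩,
    ⟨c.eq_zero_of_mem_11_of_mul_12 halt hprime hc, c.eq_zero_of_mem_11_of_21_mul halt hprime hc⟩,
    ⟨c.swap.eq_zero_of_mem_11_of_21_mul halt hprime hcs,
      c.swap.eq_zero_of_mem_11_of_mul_12 halt hprime hcs⟩⟩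

theorem stmt8 {R : Type*} [NonUnitalNonAssocRing R] (halt : IsAlt R)
    (htor3 : ∀ x : R, (3 : ℕ) • x = 0 → x = 0)
    (hprime : IsPrimeRing R)
    (e₁ : R) (he : e₁ * e₁ = e₁) (hne : e₁ ≠ 0)
    (hnu : ¬ ∀ x : R, e₁ * x = x ∧ x * e₁ = x) :
    ((∀ x ∈ P12 e₁, (∀ y ∈ P21 e₁, x * y = 0) → x = 0) ∧
     (∀ x ∈ P21 e₁, (∀ y ∈ P12 e₁, x * y = 0) → x = 0)) ∧
    ((∀ x ∈ P11 e₁, (∀ y ∈ P12 e₁, x * y = 0) → x = 0) ∧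
     (∀ x ∈ P11 e₁, (∀ y ∈ P21 e₁, y * x = 0) → x = 0)) ∧
    ((∀ x ∈ P22 e₁, (∀ y ∈ P12 e₁, y * x = 0) → x = 0) ∧
     (∀ x ∈ P22 e₁, (∀ y ∈ P21 e₁, x * y = 0) → x = 0)) :=
  stmt8_general halt hprime e₁ he hne hnu
end
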